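/- arXiv:1511.03699 — 2 statements merged into one kernel-verified Lean document; each statement's English description precedes it below -/
import Mathlib

section
/- For every deterministic DSIC and IR mechanism in the two-bidder two-item online setting achieving a finite approximation factor, fix w ∈ ℝ₊² with w₁ > 0 and suppose π₂(w) > π₁(w). Then for every v in the region B_R^V(w) = {v ∈ ℝ₊² : v₁ > π₁(w) and v₂ − π₂(w) < v₁ − π₁(w)}, in the scenario where both items arrive, bidder V is allocated item 1, is not allocated item 2, and pays π₁(w). -/
open scoped ENNReal

noncomputable section

/-- Nonnegative orthant of ℝ² (valid type space of a bidder). -/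
def Nn (p : ℝ × ℝ) : Prop := 0 ≤ p.1 ∧ 0 ≤ p.2

/-- A deterministic mechanism for two unit-demand bidders `V`, `W` and two items.
`xV1 v w` is the (scenario-independent) allocation of item 1 to `V`, `xV2 v w`
the allocation of item 2 to `V` in the scenario where both items arrive;
`pV1` is `V`'s payment in the only-item-1 scenario and `pV2` in the both-items
scenario; similarly for `W`. -/
structure Mechanism where
  xV1 : ℝ × ℝ → ℝ × ℝ → Bool
  xV2 : ℝ × ℝ → ℝ × ℝ → Bool
  xW1 : ℝ × ℝ → ℝ × ℝ → Bool
  xW2 : ℝ × ℝ → ℝ × ℝ → Bool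
  pV1 : ℝ × ℝ → ℝ × ℝ → ℝ
  pV2 : ℝ × ℝ → ℝ × ℝ → ℝ
  pW1 : ℝ × ℝ → ℝ × ℝ → ℝ
  pW2 : ℝ × ℝ → ℝ × ℝ → ℝ
  feas1 : ∀ v w, ¬(xV1 v w = true ∧ xW1 v w = true)
  feas2 : ∀ v w, ¬(xV2 v w = true ∧ xW2 v w = true)

/-- Unit-demand value of a bidder with type `t` for the set of items indicated by `a1, a2`. -/
def setVal (t : ℝ × ℝ) (a1 a2 : Bool) : ℝ :=
  if a1 then (if a2 then max t.1 t.2 else t.1) else (if a2 then t.2 else 0)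

/-- Utility of `V` with true type `t`, report `r`, opponent report `w`, when only item 1 arrives. -/
def uV1 (m : Mechanism) (t r w : ℝ × ℝ) : ℝ := (if m.xV1 r w then t.1 else 0) - m.pV1 r w

/-- Utility of `V` with true type `t`, report `r`, opponent report `w`, when both items arrive. -/
def uV2 (m : Mechanism) (t r w : ℝ × ℝ) : ℝ := setVal t (m.xV1 r w) (m.xV2 r w) - m.pV2 r w

def uW1 (m : Mechanism) (v t r : ℝ × ℝ) : ℝ := (if m.xW1 v r then t.1 else 0) - m.pW1 v r

def uW2 (m : Mechanism) (v t r : ℝ × ℝ) : ℝ := setVal t (m.xW1 v r) (m.xW2 v r) - m.pW2 v r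

/-- Dominant-strategy incentive compatibility in every arrival scenario. -/
def DSIC (m : Mechanism) : Prop :=
  (∀ t r w, Nn t → Nn r → Nn w → uV1 m t r w ≤ uV1 m t t w) ∧
  (∀ t r w, Nn t → Nn r → Nn w → uV2 m t r w ≤ uV2 m t t w) ∧
  (∀ v t r, Nn v → Nn t → Nn r → uW1 m v t r ≤ uW1 m v t t) ∧
  (∀ v t r, Nn v → Nn t → Nn r → uW2 m v t r ≤ uW2 m v t t)

/-- Individual rationality: truthful reporting gives nonnegative utility in every scenario. -/
def IR (m : Mechanism) : Prop :=
  ∀ v w, Nn v → Nn w →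
    0 ≤ uV1 m v v w ∧ 0 ≤ uV2 m v v w ∧ 0 ≤ uW1 m v w w ∧ 0 ≤ uW2 m v w w

/-- Welfare of the mechanism's allocation when only item 1 arrives. -/
def welfare1 (m : Mechanism) (v w : ℝ × ℝ) : ℝ :=
  (if m.xV1 v w then v.1 else 0) + (if m.xW1 v w then w.1 else 0)

/-- Welfare of the mechanism's allocation when both items arrive. -/
def welfare2 (m : Mechanism) (v w : ℝ × ℝ) : ℝ :=
  setVal v (m.xV1 v w) (m.xV2 v w) + setVal w (m.xW1 v w) (m.xW2 v w)

/-- Optimal welfare when only item 1 arrives. -/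
def opt1 (v w : ℝ × ℝ) : ℝ := max v.1 w.1

/-- Optimal (max-weight matching) welfare when both items arrive. -/
def opt2 (v w : ℝ × ℝ) : ℝ := max (v.1 + w.2) (v.2 + w.1)

/-- The mechanism achieves approximation factor `H` to the optimal social welfare,
in every arrival scenario and for all reports. -/
def ApproxH (m : Mechanism) (H : ℝ) : Prop :=
  ∀ v w, Nn v → Nn w → opt1 v w ≤ H * welfare1 m v w ∧ opt2 v w ≤ H * welfare2 m v w

/-- Real-valued item-1 threshold function for bidder `V`. -/
def Thresh1 (m : Mechanism) (π₁ : ℝ × ℝ → ℝ) : Prop :=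
  ∀ w v, Nn w → Nn v →
    (π₁ w < v.1 → m.xV1 v w = true) ∧ (v.1 < π₁ w → m.xV1 v w = false)

/-- Real-valued item-2 threshold function (with threshold payment) for bidder `V`,
conditional on losing item 1. -/
def Thresh2 (m : Mechanism) (π₁ π₂ : ℝ × ℝ → ℝ) : Prop :=
  ∀ w v, Nn w → 0 < w.1 → Nn v → v.1 < π₁ w →
    (π₂ w < v.2 → m.xV2 v w = true ∧ m.pV2 v w = π₂ w) ∧
    (v.2 < π₂ w → m.xV2 v w = false ∧ m.pV2 v w = 0)

/-- When `V` wins only item 1 (in the both-items scenario) he pays `π₁ w`. -/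
def PayOne (m : Mechanism) (π₁ : ℝ × ℝ → ℝ) : Prop :=
  ∀ w v, Nn w → Nn v → m.xV1 v w = true → m.xV2 v w = false → m.pV2 v w = π₁ w

/-- Every `v` in the region `T_R^V(w)` wins both items and pays `π₂ w`. -/
def TRBoth (m : Mechanism) (π₁ π₂ : ℝ × ℝ → ℝ) : Prop :=
  ∀ w v, Nn w → 0 < w.1 → Nn v → π₁ w < v.1 → v.1 - π₁ w < v.2 - π₂ w →
    m.xV1 v w = true ∧ m.xV2 v w = true ∧ m.pV2 v w = π₂ w

/-!
Any two reports that win both items pay the same price, since otherwise the one paying more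
would switch to the other; a report in `T_R^V(w)` shows this common price is `π₂(w)`.
The report `r = (a, 0)` with `π₁(w) < a < π₂(w)` wins item 1, and by IR it cannot also win item 2
at the price `π₂(w) > a`, so it wins item 1 alone at the price `π₁(w)`. A bidder `v` in
`B_R^V(w)` who won both items would gain by reporting `r`, because
`v₁ − π₁(w) > max v₁ v₂ − π₂(w)`. Finally `a ≥ 0`, i.e. `r` is a valid report, because
`π₁(w) ≥ 0`: otherwise `(0, 1)` would win item 1 and the welfare `0` could not approximate `w₁ > 0`.
-/

namespace Mechanism

variable {m : Mechanism} {π₁ π₂ : ℝ × ℝ → ℝ} {H : ℝ} {v r w : ℝ × ℝ}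

lemma xW1_eq_false_of_xV1 (h : m.xV1 v w = true) : m.xW1 v w = false :=
  Bool.eq_false_iff.2 fun hW => m.feas1 v w ⟨h, hW⟩

lemma welfare1_eq_of_xV1 (h : m.xV1 v w = true) : welfare1 m v w = v.1 := by
  simp [welfare1, h, xW1_eq_false_of_xV1 h]

lemma _root_.Thresh1.nonneg (h1 : Thresh1 m π₁) (hA : ApproxH m H) (hw : Nn w) (hw1 : 0 < w.1) :
    0 ≤ π₁ w := by
  by_contra! hneg
  have h01 : Nn (0, 1) := ⟨le_rfl, zero_le_one⟩
  have hx : m.xV1 (0, 1) w = true := (h1 w (0, 1) hw h01).1 hneg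
  have hopt := (hA (0, 1) w h01 hw).1
  rw [welfare1_eq_of_xV1 hx, opt1] at hopt
  simp only [mul_zero, max_le_iff] at hopt
  linarith [hopt.2]

lemma uV2_of_wins_both (hx1 : m.xV1 r w = true) (hx2 : m.xV2 r w = true) :
    uV2 m v r w = max v.1 v.2 - m.pV2 r w := by
  simp [uV2, setVal, hx1, hx2]

lemma uV2_of_wins_only_item1 (hx1 : m.xV1 r w = true) (hx2 : m.xV2 r w = false) :
    uV2 m v r w = v.1 - m.pV2 r w := by
  simp [uV2, setVal, hx1, hx2]

lemma pV2_le_of_wins_both (hD : DSIC m) (hv : Nn v) (hr : Nn r) (hw : Nn w)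
    (hv1 : m.xV1 v w = true) (hv2 : m.xV2 v w = true)
    (hr1 : m.xV1 r w = true) (hr2 : m.xV2 r w = true) : m.pV2 v w ≤ m.pV2 r w := by
  have := hD.2.1 v r w hv hr hw
  rw [uV2_of_wins_both hr1 hr2, uV2_of_wins_both hv1 hv2] at this
  linarith

lemma pV2_eq_of_wins_both (hD : DSIC m) (hTR : TRBoth m π₁ π₂) (hw : Nn w) (hw1 : 0 < w.1)
    (hv : Nn v) (hv1 : m.xV1 v w = true) (hv2 : m.xV2 v w = true) : m.pV2 v w = π₂ w := by
  set s := |π₁ w| + |π₂ w| + 1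
  -- `(s, 3 * s)` lies in `T_R^V(w)`, since `s - π₁ w < 2 * s < 3 * s - π₂ w`.
  obtain ⟨hπ₁_gt, hπ₁_lt⟩ : -s < π₁ w ∧ π₁ w < s := abs_lt.1 (by linarith [abs_nonneg (π₂ w)])
  have hπ₂_lt : π₂ w < s := (abs_lt.1 (by linarith [abs_nonneg (π₁ w)])).2
  have ht : Nn (s, 3 * s) := ⟨by positivity, by positivity⟩
  obtain ⟨ht1, ht2, htp⟩ := hTR w (s, 3 * s) hw hw1 ht hπ₁_lt (by dsimp only; linarith)
  rw [← htp]
  exact le_antisymm (pV2_le_of_wins_both hD hv ht hw hv1 hv2 ht1 ht2)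
    (pV2_le_of_wins_both hD ht hv hw ht1 ht2 hv1 hv2)

lemma xV2_eq_false_of_max_lt (hD : DSIC m) (hIR : IR m) (hTR : TRBoth m π₁ π₂)
    (hw : Nn w) (hw1 : 0 < w.1) (hv : Nn v) (hv1 : m.xV1 v w = true)
    (hlt : max v.1 v.2 < π₂ w) : m.xV2 v w = false := by
  refine Bool.eq_false_iff.2 fun hv2 => ?_
  have hu := (hIR v w hv hw).2.1
  rw [uV2_of_wins_both hv1 hv2, pV2_eq_of_wins_both hD hTR hw hw1 hv hv1 hv2] at hu
  linarith

lemma xV2_eq_false_of_deviation (hD : DSIC m) (hTR : TRBoth m π₁ π₂)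
    (hw : Nn w) (hw1 : 0 < w.1) (hv : Nn v) (hr : Nn r) (hv1 : m.xV1 v w = true)
    (hr1 : m.xV1 r w = true) (hr2 : m.xV2 r w = false)
    (hlt : max v.1 v.2 - π₂ w < v.1 - m.pV2 r w) : m.xV2 v w = false := by
  refine Bool.eq_false_iff.2 fun hv2 => ?_
  have hdev := hD.2.1 v r w hv hr hw
  rw [uV2_of_wins_only_item1 hr1 hr2, uV2_of_wins_both hv1 hv2,
    pV2_eq_of_wins_both hD hTR hw hw1 hv hv1 hv2] at hdev
  linarith

end Mechanism

open Mechanism in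
theorem BR_gets_only_item1_general (m : Mechanism) (hD : DSIC m) (hIR : IR m)
    (H : ℝ) (hA : ApproxH m H)
    (π₁ π₂ : ℝ × ℝ → ℝ)
    (h1 : Thresh1 m π₁)
    (hpay : PayOne m π₁) (hTR : TRBoth m π₁ π₂) :
    ∀ w, Nn w → 0 < w.1 → π₁ w < π₂ w →
      ∀ v, Nn v → π₁ w < v.1 → v.2 - π₂ w < v.1 - π₁ w →
        m.xV1 v w = true ∧ m.xV2 v w = false ∧ m.pV2 v w = π₁ w := by
  intro w hw hw1 hππ v hv hv1 hvB
  have hπ₁ := h1.nonneg hA hw hw1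
  obtain ⟨a, ha₁, ha₂⟩ := exists_between hππ
  have hr : Nn (a, 0) := ⟨by linarith, le_rfl⟩
  have hr1 : m.xV1 (a, 0) w = true := (h1 w (a, 0) hw hr).1 ha₁
  have hr2 : m.xV2 (a, 0) w = false :=
    xV2_eq_false_of_max_lt hD hIR hTR hw hw1 hr hr1 (max_lt ha₂ (by dsimp only; linarith))
  have hrp : m.pV2 (a, 0) w = π₁ w := hpay w (a, 0) hw hr hr1 hr2
  have hv1' : m.xV1 v w = true := (h1 w v hw hv).1 hv1
  have hv2 : m.xV2 v w = false :=
    xV2_eq_false_of_deviation hD hTR hw hw1 hv hr hv1' hr1 hr2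
      (by rw [hrp, ← max_sub_sub_right]; exact max_lt (by linarith) hvB)
  exact ⟨hv1', hv2, hpay w v hw hv hv1' hv2⟩

/-- for a DSIC + IR mechanism with finite approximation factor,
if `w₁ > 0` and `π₂(w) > π₁(w)`, then every
`v ∈ B_R^V(w) = {v : v₁ > π₁(w), v₂ − π₂(w) < v₁ − π₁(w)}` gets item 1,
does not get item 2, and pays `π₁(w)` in the both-items scenario. -/
theorem BR_gets_only_item1 (m : Mechanism) (hD : DSIC m) (hIR : IR m)
    (H : ℝ) (hH : 1 ≤ H) (hA : ApproxH m H)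
    (π₁ π₂ : ℝ × ℝ → ℝ)
    (h1 : Thresh1 m π₁) (h2 : Thresh2 m π₁ π₂)
    (hpay : PayOne m π₁) (hTR : TRBoth m π₁ π₂) :
    ∀ w, Nn w → 0 < w.1 → π₁ w < π₂ w →
      ∀ v, Nn v → π₁ w < v.1 → v.2 - π₂ w < v.1 - π₁ w →
        m.xV1 v w = true ∧ m.xV2 v w = false ∧ m.pV2 v w = π₁ w :=
  BR_gets_only_item1_general m hD hIR H hA π₁ π₂ h1 hpay hTR
end
end

section
/- Main theorem: In the two-bidder two-item online setting, no deterministic DSIC and IR mechanism achieves any finite approximation factor H to the optimal social welfare. That is, for every deterministic mechanism that is DSIC and IR and every H ≥ 1, there exist reports (v,w) and an arrival scenario for which the welfare of the mechanism's allocation is strictly less than 1/H times the optimal matching welfare. -/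
open scoped ENNReal

noncomputable section

lemma sv_tt (t : ℝ × ℝ) : setVal t true true = max t.1 t.2 := by simp [setVal]
lemma sv_tf (t : ℝ × ℝ) : setVal t true false = t.1 := by simp [setVal]
lemma sv_ft (t : ℝ × ℝ) : setVal t false true = t.2 := by simp [setVal]
lemma sv_ff (t : ℝ × ℝ) : setVal t false false = 0 := by simp [setVal]
lemma sv_tt' (a b : ℝ) : setVal (a,b) true true = max a b := by simp [setVal]
lemma sv_tf' (a b : ℝ) : setVal (a,b) true false = a := by simp [setVal]
lemma sv_ft' (a b : ℝ) : setVal (a,b) false true = b := by simp [setVal]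
lemma sv_ff' (a b : ℝ) : setVal (a,b) false false = 0 := by simp [setVal]
lemma sv_t0 (a : ℝ) (ha : 0 ≤ a) (b : Bool) : setVal (a, 0) true b = a := by
  cases b <;> simp [setVal, ha]
lemma sv_f0 (a : ℝ) (b : Bool) : setVal (a, 0) false b = 0 := by
  cases b <;> simp [setVal]

lemma mkNn {a b : ℝ} (ha : 0 ≤ a) (hb : 0 ≤ b) : Nn (a, b) := ⟨ha, hb⟩

/-- The (negated) conclusion: the mechanism is an `H`-approximation at all points. -/
def Apx (m : Mechanism) (H : ℝ) : Prop :=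
  ∀ v w : ℝ × ℝ, Nn v → Nn w →
    opt1 v w ≤ H * welfare1 m v w ∧ opt2 v w ≤ H * welfare2 m v w

lemma l_fV {m : Mechanism} {H : ℝ} (hH : 1 ≤ H) (hcon : Apx m H) {v w : ℝ × ℝ}
    (hv : Nn v) (hw : Nn w) (hlt : H * w.1 < v.1) :
    m.xV1 v w = true ∧ m.xW1 v w = false := by
  have h1 := (hcon v w hv hw).1
  unfold opt1 welfare1 at h1
  cases hb : m.xV1 v w with
  | false =>
    exfalso
    rw [hb] at h1
    cases hb2 : m.xW1 v w with
    | false => rw [hb2] at h1; simp at h1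
               nlinarith [le_max_left v.1 w.1, hv.1, hw.1]
    | true => rw [hb2] at h1; simp at h1
              nlinarith [le_max_left v.1 w.1, hv.1, hw.1]
  | true =>
    refine ⟨rfl, ?_⟩
    cases hb2 : m.xW1 v w with
    | false => rfl
    | true => exact absurd ⟨hb, hb2⟩ (m.feas1 v w)

lemma l_fW {m : Mechanism} {H : ℝ} (hH : 1 ≤ H) (hcon : Apx m H) {v w : ℝ × ℝ}
    (hv : Nn v) (hw : Nn w) (hlt : H * v.1 < w.1) :
    m.xW1 v w = true ∧ m.xV1 v w = false := by
  have h1 := (hcon v w hv hw).1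
  unfold opt1 welfare1 at h1
  cases hb : m.xW1 v w with
  | false =>
    exfalso
    rw [hb] at h1
    cases hb2 : m.xV1 v w with
    | false => rw [hb2] at h1; simp at h1
               nlinarith [le_max_right v.1 w.1, hv.1, hw.1]
    | true => rw [hb2] at h1; simp at h1
              nlinarith [le_max_right v.1 w.1, hv.1, hw.1]
  | true =>
    refine ⟨rfl, ?_⟩
    cases hb2 : m.xV1 v w with
    | false => rfl
    | true => exact absurd ⟨hb2, hb⟩ (m.feas1 v w)

/-- Region A (W owns item 1): forced V-take of item 2. -/
lemma l_forceV2 {m : Mechanism} {H : ℝ} (hH : 1 ≤ H) (hcon : Apx m H) {v w : ℝ × ℝ}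
    (hv : Nn v) (hw : Nn w) (hx1 : m.xV1 v w = false) (hw1 : m.xW1 v w = true)
    (hlt : H * max w.1 w.2 < v.2) : m.xV2 v w = true := by
  have hH0 : (0:ℝ) < H := by linarith
  by_contra hb
  have hb' : m.xV2 v w = false := by simpa using hb
  have h2 := (hcon v w hv hw).2
  unfold welfare2 opt2 at h2
  rw [hx1, hw1, hb', sv_ff] at h2
  have hmul : H * (setVal w true (m.xW2 v w)) ≤ H * max w.1 w.2 := by
    have : setVal w true (m.xW2 v w) ≤ max w.1 w.2 := by
      cases hb2 : m.xW2 v w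
      · rw [sv_tf]; exact le_max_left _ _
      · rw [sv_tt]
    nlinarith
  nlinarith [le_max_right (v.1 + w.2) (v.2 + w.1), hv.1, hw.1]

/-- Region A : forced W-take of item 2. -/
lemma l_forceW2' {m : Mechanism} {H : ℝ} (hH : 1 ≤ H) (hcon : Apx m H) {v w : ℝ × ℝ}
    (hv : Nn v) (hw : Nn w) (hx1 : m.xV1 v w = false) (hw1 : m.xW1 v w = true)
    (hlt : H * (v.2 + w.1) < w.2) : m.xW2 v w = true := by
  have hH0 : (0:ℝ) < H := by linarith
  by_contra hb
  have hb' : m.xW2 v w = false := by simpa using hb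
  have h2 := (hcon v w hv hw).2
  unfold welfare2 opt2 at h2
  rw [hx1, hw1, hb', sv_tf] at h2
  have hval : setVal v false (m.xV2 v w) ≤ v.2 := by
    cases hb2 : m.xV2 v w
    · rw [sv_ff]; exact hv.2
    · rw [sv_ft]
  nlinarith [le_max_left (v.1 + w.2) (v.2 + w.1), hv.1, hw.1]

/-- Region A : someone must take item 2. -/
lemma l_someA {m : Mechanism} {H : ℝ} (hH : 1 ≤ H) (hcon : Apx m H) {v w : ℝ × ℝ}
    (hv : Nn v) (hw : Nn w) (hx1 : m.xV1 v w = false) (hw1 : m.xW1 v w = true)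
    (hw2 : m.xW2 v w = false) (hlt : H * w.1 < w.2) : m.xV2 v w = true := by
  by_contra hb
  have hb' : m.xV2 v w = false := by simpa using hb
  have h2 := (hcon v w hv hw).2
  unfold welfare2 opt2 at h2
  rw [hx1, hw1, hb', hw2, sv_ff, sv_tf] at h2
  nlinarith [le_max_left (v.1 + w.2) (v.2 + w.1), hv.1, hw.1]

/-- Region B (V owns item 1): forced W-take of item 2. -/
lemma l_forceW2 {m : Mechanism} {H : ℝ} (hH : 1 ≤ H) (hcon : Apx m H) {v w : ℝ × ℝ}
    (hv : Nn v) (hw : Nn w) (hx1 : m.xV1 v w = true) (hw1 : m.xW1 v w = false)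
    (hlt : H * max v.1 v.2 < w.2) : m.xW2 v w = true := by
  have hH0 : (0:ℝ) < H := by linarith
  by_contra hb
  have hb' : m.xW2 v w = false := by simpa using hb
  have h2 := (hcon v w hv hw).2
  unfold welfare2 opt2 at h2
  rw [hx1, hw1, hb', sv_ff] at h2
  have hmul : H * (setVal v true (m.xV2 v w)) ≤ H * max v.1 v.2 := by
    have : setVal v true (m.xV2 v w) ≤ max v.1 v.2 := by
      cases hb2 : m.xV2 v w
      · rw [sv_tf]; exact le_max_left _ _
      · rw [sv_tt]
    nlinarith
  nlinarith [le_max_left (v.1 + w.2) (v.2 + w.1), hv.1, hw.1]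

/-- Region B : forced V-take of item 2. -/
lemma l_forceV2' {m : Mechanism} {H : ℝ} (hH : 1 ≤ H) (hcon : Apx m H) {v w : ℝ × ℝ}
    (hv : Nn v) (hw : Nn w) (hx1 : m.xV1 v w = true) (hw1 : m.xW1 v w = false)
    (hlt : H * (v.1 + w.2) < v.2) : m.xV2 v w = true := by
  have hH0 : (0:ℝ) < H := by linarith
  by_contra hb
  have hb' : m.xV2 v w = false := by simpa using hb
  have h2 := (hcon v w hv hw).2
  unfold welfare2 opt2 at h2
  rw [hx1, hw1, hb', sv_tf] at h2
  have hval : setVal w false (m.xW2 v w) ≤ w.2 := by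
    cases hb2 : m.xW2 v w
    · rw [sv_ff]; exact hw.2
    · rw [sv_ft]
  nlinarith [le_max_right (v.1 + w.2) (v.2 + w.1), hv.1, hw.1]

/-- Region B : someone must take item 2. -/
lemma l_someB {m : Mechanism} {H : ℝ} (hH : 1 ≤ H) (hcon : Apx m H) {v w : ℝ × ℝ}
    (hv : Nn v) (hw : Nn w) (hx1 : m.xV1 v w = true) (hw1 : m.xW1 v w = false)
    (hw2 : m.xW2 v w = false) (hlt : H * v.1 < v.1 + w.2) : m.xV2 v w = true := by
  by_contra hb
  have hb' : m.xV2 v w = false := by simpa using hb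
  have h2 := (hcon v w hv hw).2
  unfold welfare2 opt2 at h2
  rw [hx1, hw1, hb', hw2, sv_tf, sv_ff] at h2
  nlinarith [le_max_left (v.1 + w.2) (v.2 + w.1), hv.1, hw.1]

set_option maxHeartbeats 1000000 in
lemma l_nums (H : ℝ) (hH : 1 ≤ H) :
    ∃ u U X R Z zo cl : ℝ,
      u = 2*H ∧ U = 2*H^3 + 5*H ∧ H * zo = R - 1 - H ∧ H * cl = U - H ∧
      0 < u ∧ H * 1 < u ∧ 0 < U ∧ u + 1 < U ∧ H * 1 < U ∧
      H * U < X ∧ H * u < X ∧ H * 1 < X ∧ 0 < X ∧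
      0 < R ∧ u < R - 2 ∧ U < R - 1 ∧ H * U < R - 1 ∧ 0 < R - 2 ∧
      H * X < X + (R - 2) ∧
      H * R < Z ∧ H * (X + R) < Z ∧ X < Z ∧ 1 < Z ∧ 0 < Z ∧
      X + 2 < zo ∧ 0 ≤ zo ∧ 0 ≤ cl ∧ H * cl < U := by
  have hH0 : (0:ℝ) < H := by linarith
  have hH2 : 1 ≤ H^2 := by nlinarith
  have hH3 : H ≤ H^3 := by nlinarith
  obtain ⟨u, hu_def⟩ : ∃ u : ℝ, u = 2*H := ⟨_, rfl⟩
  obtain ⟨U, hU_def⟩ : ∃ U : ℝ, U = 2*H^3 + 5*H := ⟨_, rfl⟩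
  obtain ⟨X, hX_def⟩ : ∃ X : ℝ, X = H*U + 1 := ⟨_, rfl⟩
  obtain ⟨R, hR_def⟩ : ∃ R : ℝ, R = 10*H*(X+1) := ⟨_, rfl⟩
  obtain ⟨Z, hZ_def⟩ : ∃ Z : ℝ, Z = 2*H*(X+R) + 1 := ⟨_, rfl⟩
  obtain ⟨zo, hzo_def⟩ : ∃ zo : ℝ, zo = (R-1)/H - 1 := ⟨_, rfl⟩
  obtain ⟨cl, hcl_def⟩ : ∃ cl : ℝ, cl = U/H - 1 := ⟨_, rfl⟩
  have hu_pos : 0 < u := by rw [hu_def]; linarith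
  have hHu : H * 1 < u := by rw [hu_def]; linarith
  have hU_pos : 0 < U := by rw [hU_def]; nlinarith
  have huU : u + 1 < U := by rw [hu_def, hU_def]; nlinarith
  have hH_U : H * 1 < U := by rw [hU_def]; nlinarith
  have hHuU : H * u ≤ U := by rw [hu_def, hU_def]; nlinarith
  have hX_gt_HU : H * U < X := by rw [hX_def]; linarith
  have hHU_nn : 0 ≤ H * U := by positivity
  have hHu_X : H * u < X := by nlinarith [mul_le_mul_of_nonneg_left hHuU (le_of_lt hH0), mul_le_mul_of_nonneg_right hH (le_of_lt hU_pos)]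
  have hU_le_HU : U ≤ H * U := by nlinarith
  have hU_X : U < X := by linarith
  have hH_X : H * 1 < X := by nlinarith
  have hX_pos : 0 < X := by nlinarith
  have hHX_nn : 0 ≤ H * X := by positivity
  have hHX_R : H * X + H * X + 8 * H ≤ R := by rw [hR_def]; nlinarith
  have hX_le_HX : X ≤ H * X := by nlinarith
  have hR_pos : 0 < R := by nlinarith
  have hu_R2 : u < R - 2 := by
    have : H * u < H * X := by nlinarith
    nlinarith
  have hU_R1 : U < R - 1 := by
    have : H * U < H * X := by nlinarith
    nlinarith
  have hHU_R1 : H * U < R - 1 := by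
    have : H * U < H * X := by nlinarith
    nlinarith
  have hR2_pos : (0:ℝ) < R - 2 := by nlinarith
  have hn5 : H * X < X + (R - 2) := by nlinarith
  have hXR_nn : 0 ≤ H * (X + R) := by positivity
  have hZ_HR : H * R < Z := by rw [hZ_def]; nlinarith
  have hZ_HXR : H * (X + R) < Z := by rw [hZ_def]; nlinarith
  have hZ_X : X < Z := by
    have : X + R ≤ H * (X + R) := by nlinarith
    linarith
  have hZ_1 : (1:ℝ) < Z := by
    have : X + R ≤ H * (X + R) := by nlinarith
    nlinarith
  have hZ_pos : (0:ℝ) < Z := by nlinarith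
  have hzo_mul : H * zo = R - 1 - H := by
    rw [hzo_def]; field_simp
  have hzo_X2 : X + 2 < zo := by
    have h1 : H * (X + 2) < H * zo := by
      rw [hzo_mul]
      nlinarith
    exact lt_of_mul_lt_mul_left h1 (le_of_lt hH0)
  have hzo_nn : 0 ≤ zo := by linarith
  have hcl_mul : H * cl = U - H := by rw [hcl_def]; field_simp
  have hcl_nn : 0 ≤ cl := by
    have h1 : H * 0 ≤ H * cl := by
      rw [hcl_mul, hU_def]; nlinarith
    exact le_of_mul_le_mul_left (by linarith) hH0
  have hcl_U : H * cl < U := by rw [hcl_mul]; linarith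
  exact ⟨u, U, X, R, Z, zo, cl, hu_def, hU_def, hzo_mul, hcl_mul,
    hu_pos, hHu, hU_pos, huU, hH_U, hX_gt_HU, hHu_X, hH_X, hX_pos,
    hR_pos, hu_R2, hU_R1, hHU_R1, hR2_pos, hn5,
    hZ_HR, hZ_HXR, hZ_X, hZ_1, hZ_pos, hzo_X2, hzo_nn, hcl_nn, hcl_U⟩

set_option maxHeartbeats 3000000 in
/-- Main Theorem: no deterministic DSIC + IR mechanism achieves any
finite approximation factor `H ≥ 1`: there are nonnegative reports and an arrival
scenario where the mechanism's welfare is strictly less than `1/H` of the optimum. -/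
theorem main_impossibility (m : Mechanism) (hD : DSIC m) (hIR : IR m)
    (H : ℝ) (hH : 1 ≤ H) :
    ∃ v w : ℝ × ℝ, Nn v ∧ Nn w ∧
      (H * welfare1 m v w < opt1 v w ∨ H * welfare2 m v w < opt2 v w) := by
  by_contra hcon0
  push_neg at hcon0
  have hcon : Apx m H := fun v w hv hw => hcon0 v w hv hw
  clear hcon0
  obtain ⟨hdV1, hdV2, hdW1, hdW2⟩ := hD
  have hH0 : (0:ℝ) < H := by linarith
  obtain ⟨u, U, X, R, Z, zo, cl, hu_def, hU_def, hzo_mul, hcl_mul,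
    hu_pos, hHu, hU_pos, huU, hH_U, hX_gt_HU, hHu_X, hH_X, hX_pos,
    hR_pos, hu_R2, hU_R1, hHU_R1, hR2_pos, hn5,
    hZ_HR, hZ_HXR, hZ_X, hZ_1, hZ_pos, hzo_X2, hzo_nn, hcl_nn, hcl_U⟩ := l_nums H hH
  -- Nn facts
  have hNu2 : Nn (u, R-2) := mkNn hu_pos.le (by linarith)
  have hNU1 : Nn (U, R-1) := mkNn hU_pos.le (by linarith)
  have hN1Z : Nn ((1:ℝ), Z) := mkNn (by norm_num) hZ_pos.le
  have hN10 : Nn ((1:ℝ), (0:ℝ)) := mkNn (by norm_num) (le_refl 0)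
  have hNX0 : Nn (X, (0:ℝ)) := mkNn hX_pos.le (le_refl 0)
  have hNXZ : Nn (X, Z) := mkNn hX_pos.le hZ_pos.le
  have hNXzo : Nn (X, zo) := mkNn hX_pos.le hzo_nn
  have hNE : Nn (H*u+1, (0:ℝ)) := mkNn (by positivity) (le_refl 0)
  have hNcl : Nn (cl, (0:ℝ)) := mkNn hcl_nn (le_refl 0)
  have hNu0 : Nn (u, (0:ℝ)) := mkNn hu_pos.le (le_refl 0)
  -- item-1 facts at fixed profiles
  have hfw_1Z_u := l_fW hH hcon hN1Z hNu2 hHu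
  have hfw_1Z_U := l_fW hH hcon hN1Z hNU1 hH_U
  have hfv_XZ_u := l_fV hH hcon hNXZ hNu2 hHu_X
  have hfv_XZ_U := l_fV hH hcon hNXZ hNU1 hX_gt_HU
  have hfv_X0_u := l_fV hH hcon hNX0 hNu2 hHu_X
  have hfv_X0_U := l_fV hH hcon hNX0 hNU1 hX_gt_HU
  have hfw_10_u := l_fW hH hcon hN10 hNu2 hHu
  have hfw_10_U := l_fW hH hcon hN10 hNU1 hH_U
  -- Step A : forced item-2 allocations at the price probes
  have hfa_u : m.xV2 (1, Z) (u, R-2) = true := by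
    apply l_forceV2 hH hcon hN1Z hNu2 hfw_1Z_u.2 hfw_1Z_u.1
    show H * max u (R-2) < Z
    have hm : max u (R-2) ≤ R := max_le (by linarith) (by linarith)
    have := mul_le_mul_of_nonneg_left hm hH0.le
    linarith
  have hfa_U : m.xV2 (1, Z) (U, R-1) = true := by
    apply l_forceV2 hH hcon hN1Z hNU1 hfw_1Z_U.2 hfw_1Z_U.1
    show H * max U (R-1) < Z
    have hm : max U (R-1) ≤ R := max_le (by linarith) (by linarith)
    have := mul_le_mul_of_nonneg_left hm hH0.le
    linarith
  have hfb_u : m.xV2 (X, Z) (u, R-2) = true := by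
    apply l_forceV2' hH hcon hNXZ hNu2 hfv_XZ_u.1 hfv_XZ_u.2
    show H * (X + (R-2)) < Z
    have : (X + (R-2)) ≤ X + R := by linarith
    have := mul_le_mul_of_nonneg_left this hH0.le
    linarith
  have hfb_U : m.xV2 (X, Z) (U, R-1) = true := by
    apply l_forceV2' hH hcon hNXZ hNU1 hfv_XZ_U.1 hfv_XZ_U.2
    show H * (X + (R-1)) < Z
    have : (X + (R-1)) ≤ X + R := by linarith
    have := mul_le_mul_of_nonneg_left this hH0.le
    linarith
  -- Step B : the price of {2} equals the price of {1,2}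
  have hPEQ_u : m.pV2 (1, Z) (u, R-2) = m.pV2 (X, Z) (u, R-2) := by
    have h1 := hdV2 (1, Z) (X, Z) (u, R-2) hN1Z hNXZ hNu2
    have h2 := hdV2 (X, Z) (1, Z) (u, R-2) hNXZ hN1Z hNu2
    simp only [uV2] at h1 h2
    rw [hfv_XZ_u.1, hfb_u, hfw_1Z_u.2, hfa_u] at h1
    rw [hfw_1Z_u.2, hfa_u, hfv_XZ_u.1, hfb_u] at h2
    simp only [sv_tt', sv_ft'] at h1 h2
    rw [max_eq_right (le_of_lt hZ_1)] at h1
    rw [max_eq_right (le_of_lt hZ_X)] at h2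
    linarith
  have hPEQ_U : m.pV2 (1, Z) (U, R-1) = m.pV2 (X, Z) (U, R-1) := by
    have h1 := hdV2 (1, Z) (X, Z) (U, R-1) hN1Z hNXZ hNU1
    have h2 := hdV2 (X, Z) (1, Z) (U, R-1) hNXZ hN1Z hNU1
    simp only [uV2] at h1 h2
    rw [hfv_XZ_U.1, hfb_U, hfw_1Z_U.2, hfa_U] at h1
    rw [hfw_1Z_U.2, hfa_U, hfv_XZ_U.1, hfb_U] at h2
    simp only [sv_tt', sv_ft'] at h1 h2
    rw [max_eq_right (le_of_lt hZ_1)] at h1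
    rw [max_eq_right (le_of_lt hZ_X)] at h2
    linarith
  -- Step C : item-1 price upper bound at (u, R-2)
  have hc_up : m.pV2 (X, 0) (u, R-2) - m.pV2 (1, 0) (u, R-2) ≤ H*u + 1 := by
    have hEnn : (0:ℝ) ≤ H*u + 1 := hNE.1
    have hE1 := l_fV hH hcon hNE hNu2 (show H * u < H*u+1 by linarith)
    have ha := hdV2 (H*u+1, 0) (X, 0) (u, R-2) hNE hNX0 hNu2
    have hb := hdV2 (X, 0) (H*u+1, 0) (u, R-2) hNX0 hNE hNu2
    have hc := hdV2 (H*u+1, 0) (1, 0) (u, R-2) hNE hN10 hNu2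
    simp only [uV2] at ha hb hc
    rw [hfv_X0_u.1, hE1.1] at ha
    rw [hE1.1, hfv_X0_u.1] at hb
    rw [hfw_10_u.2, hE1.1] at hc
    simp only [sv_t0 (H*u+1) hEnn, sv_t0 X hX_pos.le, sv_f0] at ha hb hc
    linarith
  -- Step D : item-1 price lower bound at (U, R-1)
  have hc_lo : cl ≤ m.pV2 (X, 0) (U, R-1) - m.pV2 (1, 0) (U, R-1) := by
    have hcl1 := l_fW hH hcon hNcl hNU1 hcl_U
    have ha := hdV2 (cl, 0) (X, 0) (U, R-1) hNcl hNX0 hNU1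
    have hb := hdV2 (cl, 0) (1, 0) (U, R-1) hNcl hN10 hNU1
    have hc := hdV2 (1, 0) (cl, 0) (U, R-1) hN10 hNcl hNU1
    simp only [uV2] at ha hb hc
    rw [hfv_X0_U.1, hcl1.2] at ha
    rw [hfw_10_U.2, hcl1.2] at hb
    rw [hcl1.2, hfw_10_U.2] at hc
    simp only [sv_t0 cl hcl_nn, sv_t0 X hX_pos.le, sv_f0] at ha hb hc
    linarith
  -- E2a : a type (X, s) that does not receive item 2 at (U,R-1) bounds the add-on price
  have hE2a : ∀ s : ℝ, X < s → m.xV2 (X, s) (U, R-1) = false →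
      s - X ≤ m.pV2 (X, Z) (U, R-1) - m.pV2 (X, 0) (U, R-1) := by
    intro s hXs hfalse
    have hNs : Nn (X, s) := mkNn hX_pos.le (by linarith)
    have hx1 := l_fV hH hcon hNs hNU1 hX_gt_HU
    have h1 := hdV2 (X, s) (X, Z) (U, R-1) hNs hNXZ hNU1
    have h2 := hdV2 (X, 0) (X, s) (U, R-1) hNX0 hNs hNU1
    simp only [uV2] at h1 h2
    rw [hfv_XZ_U.1, hfb_U, hx1.1, hfalse] at h1
    rw [hx1.1, hfalse, hfv_X0_U.1] at h2
    simp only [sv_tt', sv_tf'] at h1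
    rw [max_eq_right (le_of_lt hXs)] at h1
    simp only [sv_t0 X hX_pos.le] at h2
    linarith
  -- Step E : lower bound for the add-on price at (U, R-1)
  have hzoW2 : m.xW2 (X, zo) (U, R-1) = true := by
    have hx1 := l_fV hH hcon hNXzo hNU1 hX_gt_HU
    apply l_forceW2 hH hcon hNXzo hNU1 hx1.1 hx1.2
    show H * max X zo < R - 1
    rw [max_eq_right (by linarith : X ≤ zo), hzo_mul]
    linarith
  have hzoV2 : m.xV2 (X, zo) (U, R-1) = false := by
    cases h : m.xV2 (X, zo) (U, R-1) with
    | false => rfl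
    | true => exact absurd ⟨h, hzoW2⟩ (m.feas2 _ _)
  have hBU_lo : zo - X ≤ m.pV2 (X, Z) (U, R-1) - m.pV2 (X, 0) (U, R-1) :=
    hE2a zo (by linarith) hzoV2
  -- Step F : the probe type (X, z) just above the add-on price takes item 2 at (U,R-1)
  obtain ⟨z, hz_def⟩ : ∃ z : ℝ,
      z = X + (m.pV2 (X, Z) (U, R-1) - m.pV2 (X, 0) (U, R-1)) + 1 := ⟨_, rfl⟩
  have hz_X : X < z := by rw [hz_def]; linarith
  have hz_nn : 0 ≤ z := by linarith
  have hNz : Nn (X, z) := mkNn hX_pos.le hz_nn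
  have hfvz_U := l_fV hH hcon hNz hNU1 hX_gt_HU
  have hz2 : m.xV2 (X, z) (U, R-1) = true := by
    cases h : m.xV2 (X, z) (U, R-1) with
    | true => rfl
    | false =>
      exfalso
      have h' := hE2a z hz_X h
      rw [hz_def] at h'
      linarith
  have hzW2U : m.xW2 (X, z) (U, R-1) = false := by
    cases h : m.xW2 (X, z) (U, R-1) with
    | false => rfl
    | true => exact absurd ⟨hz2, h⟩ (m.feas2 _ _)
  -- Step G : probe prices for W's menu at v = (X,z)
  obtain ⟨Z2, hZ2_def⟩ : ∃ q : ℝ, q = 2*H*(X+z) + 1 := ⟨_, rfl⟩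
  have hZ2_pos : 0 < Z2 := by rw [hZ2_def]; positivity
  have hN1Z2 : Nn ((1:ℝ), Z2) := mkNn (by norm_num) hZ2_pos.le
  have hfvz_1Z2 := l_fV hH hcon hNz hN1Z2 hH_X
  have hzW2Z2 : m.xW2 (X, z) (1, Z2) = true := by
    apply l_forceW2 hH hcon hNz hN1Z2 hfvz_1Z2.1 hfvz_1Z2.2
    show H * max X z < Z2
    rw [max_eq_right (le_of_lt hz_X), hZ2_def]
    nlinarith [mul_nonneg hH0.le hX_pos.le, mul_nonneg hH0.le hz_nn]
  -- Step H : the Γ lower bound    R-1 ≤ q2 - q∅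
  have hfvz_10 := l_fV hH hcon hNz hN10 hH_X
  have hGam : R - 1 ≤ m.pW2 (X, z) (1, Z2) - m.pW2 (X, z) (1, 0) := by
    have h1 := hdW2 (X, z) (U, R-1) (1, Z2) hNz hNU1 hN1Z2
    have h2 := hdW2 (X, z) (1, 0) (U, R-1) hNz hN10 hNU1
    simp only [uW2] at h1 h2
    rw [hfvz_1Z2.2, hzW2Z2, hfvz_U.2, hzW2U] at h1
    rw [hfvz_U.2, hzW2U, hfvz_10.2] at h2
    rw [sv_ft', sv_ff'] at h1
    rw [sv_ff'] at h2
    simp only [sv_f0] at h2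
    linarith
  -- Step I : W does not take item 2 at ((X,z),(u,R-2))
  have hfvz_u := l_fV hH hcon hNz hNu2 hHu_X
  have hzW2u : m.xW2 (X, z) (u, R-2) = false := by
    cases hb : m.xW2 (X, z) (u, R-2) with
    | false => rfl
    | true =>
      exfalso
      have h1 := hdW2 (X, z) (1, Z2) (u, R-2) hNz hN1Z2 hNu2
      have h2 := hdW2 (X, z) (u, R-2) (1, 0) hNz hNu2 hN10
      simp only [uW2] at h1 h2
      rw [hfvz_u.2, hb, hfvz_1Z2.2, hzW2Z2] at h1
      rw [hfvz_10.2, hfvz_u.2, hb] at h2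
      simp only [sv_ft'] at h1
      rw [sv_ft'] at h2
      cases hb0 : m.xW2 (X, z) (1, 0) with
      | true => rw [hb0, sv_ft'] at h2; linarith
      | false => rw [hb0, sv_ff'] at h2; linarith
  -- Step J : so V takes item 2 at ((X,z),(u,R-2))
  have hzV2u : m.xV2 (X, z) (u, R-2) = true := by
    apply l_someB hH hcon hNz hNu2 hfvz_u.1 hfvz_u.2 hzW2u
    show H * X < X + (R-2)
    exact hn5
  -- Step K : transfer of the add-on price to (u, R-2)
  have hBu_le : m.pV2 (X, Z) (u, R-2) - m.pV2 (X, 0) (u, R-2) ≤ z - X := by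
    have h2 := hdV2 (X, Z) (X, z) (u, R-2) hNXZ hNz hNu2
    have h3 := hdV2 (X, z) (X, 0) (u, R-2) hNz hNX0 hNu2
    simp only [uV2] at h2 h3
    rw [hfvz_u.1, hzV2u, hfv_XZ_u.1, hfb_u] at h2
    rw [hfv_X0_u.1, hfvz_u.1, hzV2u] at h3
    simp only [sv_tt'] at h2
    rw [sv_tt'] at h3
    rw [max_eq_right (le_of_lt hz_X)] at h3
    cases hb1 : m.xV2 (X, 0) (u, R-2) with
    | false => rw [hb1, sv_tf'] at h3; linarith
    | true =>
      rw [hb1, sv_tt'] at h3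
      rw [max_eq_right (le_of_lt hz_X)] at h3
      linarith
  -- Step L : the probe type (1, y) just above V's {2}-price at (u,R-2)
  obtain ⟨bu, hbu_def⟩ : ∃ b : ℝ,
      b = m.pV2 (1, Z) (u, R-2) - m.pV2 (1, 0) (u, R-2) := ⟨_, rfl⟩
  obtain ⟨y, hy_def⟩ : ∃ y : ℝ, y = max (bu + 1) 1 := ⟨_, rfl⟩
  have hy1 : (1:ℝ) ≤ y := by rw [hy_def]; exact le_max_right _ _
  have hy_bu : bu + 1 ≤ y := by rw [hy_def]; exact le_max_left _ _
  have hNy : Nn ((1:ℝ), y) := mkNn (by norm_num) (by linarith)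
  have hfy_u := l_fW hH hcon hNy hNu2 hHu
  have hyV2 : m.xV2 (1, y) (u, R-2) = true := by
    cases hbv : m.xV2 (1, y) (u, R-2) with
    | true => rfl
    | false =>
      exfalso
      have h1 := hdV2 (1, y) (1, Z) (u, R-2) hNy hN1Z hNu2
      have h2 := hdV2 (1, 0) (1, y) (u, R-2) hN10 hNy hNu2
      simp only [uV2] at h1 h2
      rw [hfw_1Z_u.2, hfa_u, hfy_u.2, hbv] at h1
      rw [hfy_u.2, hbv, hfw_10_u.2] at h2
      rw [sv_ft', sv_ff'] at h1
      rw [sv_ff'] at h2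
      simp only [sv_f0] at h2
      linarith
  have hyW2 : m.xW2 (1, y) (u, R-2) = false := by
    cases h : m.xW2 (1, y) (u, R-2) with
    | false => rfl
    | true => exact absurd ⟨hyV2, h⟩ (m.feas2 _ _)
  -- Step M : probe prices for W's menu at v = (1,y)
  obtain ⟨Z3, hZ3_def⟩ : ∃ q : ℝ, q = 2*H*(y+u) + 1 := ⟨_, rfl⟩
  have hZ3_pos : 0 < Z3 := by rw [hZ3_def]; nlinarith [mul_nonneg hH0.le (by linarith : (0:ℝ) ≤ y + u)]
  have hNuZ3 : Nn (u, Z3) := mkNn hu_pos.le hZ3_pos.le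
  have hfyZ3 := l_fW hH hcon hNy hNuZ3 hHu
  have hyW2Z3 : m.xW2 (1, y) (u, Z3) = true := by
    apply l_forceW2' hH hcon hNy hNuZ3 hfyZ3.2 hfyZ3.1
    show H * (y + u) < Z3
    rw [hZ3_def]
    nlinarith [mul_nonneg hH0.le (by linarith : (0:ℝ) ≤ y + u)]
  -- Step N : the Ĝ lower bound    (R-2) - u ≤ q12 - q1
  have hfy_u0 := l_fW hH hcon hNy hNu0 hHu
  have hGhat : (R-2) - u ≤ m.pW2 (1, y) (u, Z3) - m.pW2 (1, y) (u, 0) := by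
    have h1 := hdW2 (1, y) (u, R-2) (u, Z3) hNy hNu2 hNuZ3
    have h2 := hdW2 (1, y) (u, 0) (u, R-2) hNy hNu0 hNu2
    simp only [uW2] at h1 h2
    rw [hfyZ3.1, hyW2Z3, hfy_u.1, hyW2] at h1
    rw [hfy_u.1, hyW2, hfy_u0.1] at h2
    rw [sv_tt', sv_tf'] at h1
    rw [max_eq_right (by linarith : u ≤ R-2)] at h1
    rw [sv_tf'] at h2
    simp only [sv_t0 u hu_pos.le] at h2
    linarith
  -- Step O : W does not take item 2 at ((1,y),(U,R-1))
  have hfyU := l_fW hH hcon hNy hNU1 hH_U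
  have hyW2U : m.xW2 (1, y) (U, R-1) = false := by
    cases hb : m.xW2 (1, y) (U, R-1) with
    | false => rfl
    | true =>
      exfalso
      have h1 := hdW2 (1, y) (u, Z3) (U, R-1) hNy hNuZ3 hNU1
      have h2 := hdW2 (1, y) (U, R-1) (u, 0) hNy hNU1 hNu0
      simp only [uW2] at h1 h2
      rw [hfyU.1, hb, hfyZ3.1, hyW2Z3] at h1
      rw [hfy_u0.1, hfyU.1, hb] at h2
      simp only [sv_tt'] at h1
      rw [sv_tt'] at h2
      rw [max_eq_right (le_of_lt hU_R1)] at h2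
      cases hb3 : m.xW2 (1, y) (u, 0) with
      | true =>
        rw [hb3, sv_tt'] at h2
        rw [max_eq_right (le_of_lt hU_R1)] at h2
        linarith
      | false =>
        rw [hb3, sv_tf'] at h2
        linarith
  -- Step P : so V takes item 2 at ((1,y),(U,R-1))
  have hyV2U : m.xV2 (1, y) (U, R-1) = true := by
    apply l_someA hH hcon hNy hNU1 hfyU.2 hfyU.1 hyW2U
    show H * U < R - 1
    exact hHU_R1
  -- Step Q : βU ≤ y
  have hbetaU_y : m.pV2 (1, Z) (U, R-1) - m.pV2 (1, 0) (U, R-1) ≤ y := by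
    have h1 := hdV2 (1, Z) (1, y) (U, R-1) hN1Z hNy hNU1
    have h2 := hdV2 (1, y) (1, 0) (U, R-1) hNy hN10 hNU1
    simp only [uV2] at h1 h2
    rw [hfyU.2, hyV2U, hfw_1Z_U.2, hfa_U] at h1
    rw [hfw_10_U.2, hfyU.2, hyV2U] at h2
    simp only [sv_ft'] at h1
    rw [sv_ft'] at h2
    cases hb4 : m.xV2 (1, 0) (U, R-1) with
    | true => rw [hb4, sv_ft'] at h2; linarith
    | false => rw [hb4, sv_ff'] at h2; linarith
  -- Step R : the final contradiction
  rcases le_or_gt (bu + 1) 1 with hcase | hcase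
  · have hy_eq : y = 1 := by rw [hy_def]; exact max_eq_right hcase
    rw [hy_eq] at hbetaU_y
    linarith [hbetaU_y, hPEQ_U, hc_lo, hBU_lo, hzo_X2, hcl_nn]
  · have hy_eq : y = bu + 1 := by rw [hy_def]; exact max_eq_left (by linarith)
    have hcl_le : cl ≤ H*u + 3 := by
      linarith [hPEQ_u, hPEQ_U, hBu_le, hc_up, hc_lo, hz_def, hbu_def, hbetaU_y, hy_eq]
    have hfin : U - H ≤ H * (H*u + 3) := by
      rw [← hcl_mul]
      exact mul_le_mul_of_nonneg_left hcl_le hH0.le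
    rw [hU_def, hu_def] at hfin
    nlinarith
end
end
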